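/- The linear-algebraic data of a maximal isotropic subspace L ⊆ V ⊕ V* with (W ⊕ W⁰) ∩ L = {0} is equivalent to the data of a triple (H, ω, π) where H is a complement of W in V, ω is a skew-symmetric bilinear form on H, and π is a skew-symmetric bilinear form on H⁰: the two constructions (L ↦ (H, ω_H, π_V) and (H,ω,π) ↦ graph decomposition) are mutually inverse bijections. -/

import Mathlib

open Module

noncomputable def pairPlus {V : Type*} [AddCommGroup V] [Module ℝ V]
    (p q : V × Module.Dual ℝ V) : ℝ :=
  (1 / 2) * (p.2 q.1 + q.2 p.1)

def IsIsotropicP {V : Type*} [AddCommGroup V] [Module ℝ V]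
    (L : Submodule ℝ (V × Module.Dual ℝ V)) : Prop :=
  ∀ p ∈ L, ∀ q ∈ L, pairPlus p q = 0

def IsMaxIsotropicP {V : Type*} [AddCommGroup V] [Module ℝ V]
    (L : Submodule ℝ (V × Module.Dual ℝ V)) : Prop :=
  IsIsotropicP L ∧ ∀ L' : Submodule ℝ (V × Module.Dual ℝ V),
    IsIsotropicP L' → L ≤ L' → L = L'

/-- The horizontal space `H = {X ∈ V : ∃ α ∈ W⁰, (X,α) ∈ L}` associated with a
subspace `L ⊆ V ⊕ V*` and a subspace `W ⊆ V`. -/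
def horizSub {V : Type*} [AddCommGroup V] [Module ℝ V]
    (L : Submodule ℝ (V × Module.Dual ℝ V)) (W : Submodule ℝ V) :
    Submodule ℝ V where
  carrier := {X | ∃ α ∈ W.dualAnnihilator, (X, α) ∈ L}
  add_mem' := by
    rintro a b ⟨α, hα, hαL⟩ ⟨β, hβ, hβL⟩
    exact ⟨α + β, Submodule.add_mem _ hα hβ, L.add_mem hαL hβL⟩
  zero_mem' := ⟨0, Submodule.zero_mem _, L.zero_mem⟩
  smul_mem' := by
    rintro c a ⟨α, hα, hαL⟩
    exact ⟨c • α, Submodule.smul_mem _ _ hα, L.smul_mem c hαL⟩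

/-- The geometric data associated with a subspace `W ⊆ V`: a complement `H`
of `W`, a skew-symmetric horizontal 2-form `ω` (extended to `V` so that
`ι_X ω ∈ W⁰`), and a skew-symmetric vertical bivector `π` (extended to `V*`
so that it vanishes on `W⁰`). -/
structure GeomTriple (V : Type*) [AddCommGroup V] [Module ℝ V]
    (W : Submodule ℝ V) where
  H : Submodule ℝ V
  compl : IsCompl H W
  ω : V →ₗ[ℝ] V →ₗ[ℝ] ℝ
  ωskew : ∀ x y, ω x y = -ω y x
  ωW : ∀ x : V, ∀ w ∈ W, ω x w = 0
  π : Module.Dual ℝ V →ₗ[ℝ] Module.Dual ℝ V →ₗ[ℝ] ℝ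
  πskew : ∀ a b, π a b = -π b a
  πW : ∀ a : Module.Dual ℝ V, ∀ b ∈ W.dualAnnihilator, π a b = 0

/-!
Writing `E = pr₁ L`, one has `dim L = dim E + dim {α | (0, α) ∈ L}`, and isotropy puts the second
space inside `E⁰`; for maximal `L` it equals `E⁰`, since adjoining `0 ⊕ E⁰` keeps `L` isotropic.
So maximal isotropic subspaces have dimension `dim V`, like `W ⊕ W⁰`, and a transverse `L` is a
complement of `W ⊕ W⁰`. The `L`-components of `(X, 0)` and `(0, α)` along this splitting are
`(X - w, ω X)` and `(π♯ α, α - γ)` with `w ∈ W`, `γ ∈ W⁰`; this defines `ω` and `π♯` linearly,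
and isotropy of `L` makes them skew. Conversely `{(X + π♯ α, ι_X ω + α) : X ∈ H, α ∈ H⁰}` is
isotropic of dimension `dim H + dim H⁰ = dim V`, hence maximal.
-/

namespace Submodule

variable {K M N : Type*} [Field K] [AddCommGroup M] [Module K M] [AddCommGroup N] [Module K N]

theorem finrank_map_add_finrank_inf_ker [FiniteDimensional K M] (f : M →ₗ[K] N)
    (p : Submodule K M) :
    finrank K (p.map f) + finrank K ↥(p ⊓ LinearMap.ker f) = finrank K p := by
  rw [← (f.domRestrict p).finrank_range_add_finrank_ker, LinearMap.range_domRestrict,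
    LinearMap.ker_domRestrict, ← finrank_map_subtype_eq, map_comap_subtype]

theorem finrank_map_fst_add_finrank_comap_inr [FiniteDimensional K M] [FiniteDimensional K N]
    (L : Submodule K (M × N)) :
    finrank K (L.map (LinearMap.fst K M N)) + finrank K (L.comap (LinearMap.inr K M N)) =
      finrank K L := by
  have hinr :=
    finrank_map_add_finrank_inf_ker (LinearMap.inr K M N) (L.comap (LinearMap.inr K M N))
  rw [ker_inr, inf_bot_eq, finrank_bot, add_zero, map_comap_eq, LinearMap.range_inr,
    inf_comm] at hinr
  rw [← hinr, finrank_map_add_finrank_inf_ker]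

theorem finrank_prod [FiniteDimensional K M] [FiniteDimensional K N] (p : Submodule K M)
    (q : Submodule K N) : finrank K (p.prod q) = finrank K p + finrank K q := by
  have h := LinearMap.finrank_range_of_inj (f := p.subtype.prodMap q.subtype)
    (Prod.map_injective.mpr ⟨p.injective_subtype, q.injective_subtype⟩)
  rwa [LinearMap.range_prodMap, range_subtype, range_subtype, Module.finrank_prod] at h

theorem projection_eq_of_sub_mem {R E : Type*} [Ring R] [AddCommGroup E] [Module R E]
    {p q : Submodule R E} (hpq : IsCompl p q) {x y : E} (hy : y ∈ p) (hxy : x - y ∈ q) :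
    p.projection q hpq x = y := by
  rw [← add_sub_cancel y x, map_add, projection_apply_of_mem_left hpq hy,
    projection_apply_of_mem_right hpq hxy, add_zero]

end Submodule

section Isotropic

variable {V : Type*} [AddCommGroup V] [Module ℝ V] {L : Submodule ℝ (V × Dual ℝ V)}

theorem isIsotropicP_iff :
    IsIsotropicP L ↔ ∀ p ∈ L, ∀ q ∈ L, p.2 q.1 + q.2 p.1 = 0 := by
  simp [IsIsotropicP, pairPlus]

theorem IsIsotropicP.comap_inr_le (hL : IsIsotropicP L) :
    L.comap (LinearMap.inr ℝ V (Dual ℝ V)) ≤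
      (L.map (LinearMap.fst ℝ V (Dual ℝ V))).dualAnnihilator := by
  intro α hα
  rw [Submodule.mem_dualAnnihilator]
  rintro - ⟨p, hp, rfl⟩
  simpa using isIsotropicP_iff.mp hL _ hα p hp

theorem IsMaxIsotropicP.comap_inr_eq (hL : IsMaxIsotropicP L) :
    L.comap (LinearMap.inr ℝ V (Dual ℝ V)) =
      (L.map (LinearMap.fst ℝ V (Dual ℝ V))).dualAnnihilator := by
  refine le_antisymm hL.1.comap_inr_le fun α hα => ?_
  set E := L.map (LinearMap.fst ℝ V (Dual ℝ V))
  let L' := L ⊔ E.dualAnnihilator.map (LinearMap.inr ℝ V (Dual ℝ V))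
  have hL' : IsIsotropicP L' := by
    rw [isIsotropicP_iff]
    rintro _ hp' _ hq'
    obtain ⟨p, hp, _, ⟨γ, hγ, rfl⟩, rfl⟩ := Submodule.mem_sup.mp hp'
    obtain ⟨q, hq, _, ⟨δ, hδ, rfl⟩, rfl⟩ := Submodule.mem_sup.mp hq'
    have hγq : γ q.1 = 0 := (Submodule.mem_dualAnnihilator γ).mp hγ _ ⟨q, hq, rfl⟩
    have hδp : δ p.1 = 0 := (Submodule.mem_dualAnnihilator δ).mp hδ _ ⟨p, hp, rfl⟩
    have hpq := isIsotropicP_iff.mp hL.1 p hp q hq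
    simp only [Prod.fst_add, Prod.snd_add, LinearMap.inr_apply, add_zero, LinearMap.add_apply]
    linarith
  rw [hL.2 L' hL' le_sup_left]
  exact Submodule.mem_sup_right ⟨α, hα, rfl⟩

variable [FiniteDimensional ℝ V]

theorem IsIsotropicP.finrank_le (hL : IsIsotropicP L) : finrank ℝ L ≤ finrank ℝ V := by
  rw [← L.finrank_map_fst_add_finrank_comap_inr,
    ← Subspace.finrank_add_finrank_dualAnnihilator_eq (L.map (LinearMap.fst ℝ V (Dual ℝ V)))]
  exact Nat.add_le_add_left (Submodule.finrank_mono hL.comap_inr_le) _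

theorem IsMaxIsotropicP.finrank_eq (hL : IsMaxIsotropicP L) : finrank ℝ L = finrank ℝ V := by
  rw [← L.finrank_map_fst_add_finrank_comap_inr, hL.comap_inr_eq,
    Subspace.finrank_add_finrank_dualAnnihilator_eq]

theorem IsIsotropicP.isMaxIsotropicP (hL : IsIsotropicP L) (h : finrank ℝ L = finrank ℝ V) :
    IsMaxIsotropicP L :=
  ⟨hL, fun _ hL' hle => Submodule.eq_of_le_of_finrank_le hle (h ▸ hL'.finrank_le)⟩

end Isotropic

section Forward

variable {V : Type*} [AddCommGroup V] [Module ℝ V] {W : Submodule ℝ V}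
  {L : Submodule ℝ (V × Dual ℝ V)}

theorem IsMaxIsotropicP.isCompl_prod [FiniteDimensional ℝ V] (hL : IsMaxIsotropicP L)
    (hLW : W.prod W.dualAnnihilator ⊓ L = ⊥) : IsCompl L (W.prod W.dualAnnihilator) := by
  refine (Submodule.isCompl_iff_disjoint _ _ ?_).mpr (disjoint_iff.mpr (inf_comm L _ ▸ hLW))
  rw [Submodule.finrank_prod, Subspace.finrank_add_finrank_dualAnnihilator_eq, hL.finrank_eq,
    Module.finrank_prod, Subspace.dual_finrank_eq]

variable (hc : IsCompl L (W.prod W.dualAnnihilator))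

noncomputable def horizForm : V →ₗ[ℝ] Dual ℝ V :=
  LinearMap.snd ℝ V (Dual ℝ V) ∘ₗ L.projection _ hc ∘ₗ LinearMap.inl ℝ V (Dual ℝ V)

noncomputable def vertSharp : Dual ℝ V →ₗ[ℝ] V :=
  LinearMap.fst ℝ V (Dual ℝ V) ∘ₗ L.projection _ hc ∘ₗ LinearMap.inr ℝ V (Dual ℝ V)

theorem horizForm_apply (X : V) : horizForm hc X = (L.projection _ hc (X, 0)).2 := rfl

theorem vertSharp_apply (α : Dual ℝ V) : vertSharp hc α = (L.projection _ hc (0, α)).1 := rfl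

include hc

theorem horizForm_eq_of_mem {X : V} {α : Dual ℝ V} (hα : α ∈ W.dualAnnihilator)
    (h : (X, α) ∈ L) : horizForm hc X = α := by
  rw [horizForm_apply,
    Submodule.projection_eq_of_sub_mem hc h (by simpa using W.dualAnnihilator.neg_mem hα)]

theorem horizForm_eq_zero_of_mem {w : V} (hw : w ∈ W) : horizForm hc w = 0 := by
  rw [horizForm_apply,
    Submodule.projection_apply_of_mem_right hc ⟨hw, W.dualAnnihilator.zero_mem⟩, Prod.snd_zero]

theorem horizForm_spec (X : V) : horizForm hc X ∈ W.dualAnnihilator ∧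
    ∃ w ∈ W, (X - w, horizForm hc X) ∈ L := by
  rw [horizForm_apply]
  obtain ⟨hw, hα⟩ := Submodule.sub_projection_mem hc (X, 0)
  refine ⟨by simpa using hα, _, hw, ?_⟩
  rw [Prod.fst_sub, sub_sub_cancel]
  exact Submodule.projection_apply_mem hc (X, 0)

theorem vertSharp_eq_of_mem {X : V} {α : Dual ℝ V} (hX : X ∈ W) (h : (X, α) ∈ L) :
    vertSharp hc α = X := by
  rw [vertSharp_apply, Submodule.projection_eq_of_sub_mem hc h (by simpa using W.neg_mem hX)]

theorem vertSharp_eq_zero_of_mem {γ : Dual ℝ V} (hγ : γ ∈ W.dualAnnihilator) :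
    vertSharp hc γ = 0 := by
  rw [vertSharp_apply, Submodule.projection_apply_of_mem_right hc ⟨W.zero_mem, hγ⟩, Prod.fst_zero]

theorem vertSharp_spec (α : Dual ℝ V) : vertSharp hc α ∈ W ∧
    ∃ γ ∈ W.dualAnnihilator, (vertSharp hc α, α - γ) ∈ L := by
  rw [vertSharp_apply]
  obtain ⟨hX, hγ⟩ := Submodule.sub_projection_mem hc (0, α)
  refine ⟨by simpa using hX, _, hγ, ?_⟩
  rw [Prod.snd_sub, sub_sub_cancel]
  exact Submodule.projection_apply_mem hc (0, α)

theorem isCompl_horizSub : IsCompl (horizSub L W) W := by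
  refine ⟨Submodule.disjoint_def.mpr fun X ⟨α, hα, h⟩ hX => ?_, codisjoint_iff.mpr ?_⟩
  · have := Submodule.disjoint_def.mp hc.disjoint (X, α) h ⟨hX, hα⟩
    exact congrArg Prod.fst this
  · refine eq_top_iff.mpr fun X _ => ?_
    obtain ⟨hα, w, hw, h⟩ := horizForm_spec hc X
    exact Submodule.mem_sup.mpr ⟨X - w, ⟨_, hα, h⟩, w, hw, sub_add_cancel X w⟩

variable (hL : IsIsotropicP L)
include hL

theorem horizForm_skew (X Y : V) : horizForm hc X Y = -horizForm hc Y X := by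
  obtain ⟨hαX, w, hw, hX⟩ := horizForm_spec hc X
  obtain ⟨hαY, w', hw', hY⟩ := horizForm_spec hc Y
  have hiso := isIsotropicP_iff.mp hL _ hX _ hY
  have h1 := (Submodule.mem_dualAnnihilator _).mp hαX w' hw'
  have h2 := (Submodule.mem_dualAnnihilator _).mp hαY w hw
  simp only [map_sub] at hiso
  linarith

theorem vertSharp_skew (α β : Dual ℝ V) : α (vertSharp hc β) = -β (vertSharp hc α) := by
  obtain ⟨hXα, γ, hγ, hα⟩ := vertSharp_spec hc α
  obtain ⟨hXβ, δ, hδ, hβ⟩ := vertSharp_spec hc β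
  have hiso := isIsotropicP_iff.mp hL _ hα _ hβ
  have h1 := (Submodule.mem_dualAnnihilator _).mp hγ _ hXβ
  have h2 := (Submodule.mem_dualAnnihilator _).mp hδ _ hXα
  simp only [LinearMap.sub_apply] at hiso
  linarith

theorem mk_vertSharp_mem {α : Dual ℝ V}
    (hα : α ∈ (horizSub L W).dualAnnihilator) : (vertSharp hc α, α) ∈ L := by
  obtain ⟨hX, γ, hγ, h⟩ := vertSharp_spec hc α
  suffices hγH : γ ∈ (horizSub L W).dualAnnihilator by
    have := Submodule.disjoint_def.mp
      (Subspace.isCompl_dualAnnihilator (isCompl_horizSub hc)).disjoint γ hγH hγ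
    simpa [this] using h
  rw [Submodule.mem_dualAnnihilator] at hα ⊢
  rintro Y ⟨δ, hδ, hY⟩
  have hiso := isIsotropicP_iff.mp hL _ h _ hY
  have h1 := (Submodule.mem_dualAnnihilator _).mp hδ _ hX
  have h2 := hα Y ⟨δ, hδ, hY⟩
  simp only [LinearMap.sub_apply] at hiso
  linarith

end Forward

namespace GeomTriple

variable {V : Type*} [AddCommGroup V] [Module ℝ V] {W : Submodule ℝ V}
  {L : Submodule ℝ (V × Dual ℝ V)}

theorem ext {d d' : GeomTriple V W} (hH : d.H = d'.H) (hω : d.ω = d'.ω) (hπ : d.π = d'.π) :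
    d = d' := by
  cases d; cases d'; subst hH hω hπ; rfl

noncomputable def ofIsotropic (hL : IsIsotropicP L) (hc : IsCompl L (W.prod W.dualAnnihilator)) :
    GeomTriple V W where
  H := horizSub L W
  compl := isCompl_horizSub hc
  ω := horizForm hc
  ωskew := horizForm_skew hc hL
  ωW X := (Submodule.mem_dualAnnihilator _).mp (horizForm_spec hc X).1
  π := (Dual.eval ℝ V ∘ₗ vertSharp hc).flip
  πskew := vertSharp_skew hc hL
  πW a b hb := by simp [vertSharp_eq_zero_of_mem hc hb]

theorem ofIsotropic_π_apply (hL : IsIsotropicP L) (hc : IsCompl L (W.prod W.dualAnnihilator))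
    (β α : Dual ℝ V) : (ofIsotropic hL hc).π β α = β (vertSharp hc α) := rfl

variable (d : GeomTriple V W)

theorem ω_mem_dualAnnihilator (X : V) : d.ω X ∈ W.dualAnnihilator :=
  (Submodule.mem_dualAnnihilator _).mpr (d.ωW X)

theorem ω_eq_zero {w : V} (hw : w ∈ W) : d.ω w = 0 := by
  ext Y
  rw [d.ωskew, d.ωW Y w hw, neg_zero, LinearMap.zero_apply]

theorem disjoint_dualAnnihilator : Disjoint d.H.dualAnnihilator W.dualAnnihilator :=
  (Subspace.isCompl_dualAnnihilator d.compl).disjoint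

variable [FiniteDimensional ℝ V]

noncomputable def sharp : Dual ℝ V →ₗ[ℝ] V :=
  (Module.evalEquiv ℝ V).symm.toLinearMap ∘ₗ d.π.flip

theorem apply_sharp (α β : Dual ℝ V) : β (d.sharp α) = d.π β α := by
  simp [sharp]

theorem sharp_mem (α : Dual ℝ V) : d.sharp α ∈ W := by
  rw [← Subspace.forall_mem_dualAnnihilator_apply_eq_zero_iff]
  intro γ hγ
  rw [apply_sharp, d.πskew, d.πW α γ hγ, neg_zero]

noncomputable def graphMap : V × Dual ℝ V →ₗ[ℝ] V × Dual ℝ V :=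
  (LinearMap.fst ℝ V (Dual ℝ V) + d.sharp ∘ₗ LinearMap.snd ℝ V (Dual ℝ V)).prod
    (d.ω ∘ₗ LinearMap.fst ℝ V (Dual ℝ V) + LinearMap.snd ℝ V (Dual ℝ V))

noncomputable def graph : Submodule ℝ (V × Dual ℝ V) :=
  (d.H.prod d.H.dualAnnihilator).map d.graphMap

theorem mem_graph {p : V × Dual ℝ V} : p ∈ d.graph ↔
    ∃ X ∈ d.H, ∃ α ∈ d.H.dualAnnihilator, p = (X + d.sharp α, d.ω X + α) := by
  simp only [graph, Submodule.mem_map, Submodule.mem_prod, Prod.exists]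
  constructor
  · rintro ⟨X, α, ⟨hX, hα⟩, rfl⟩
    exact ⟨X, hX, α, hα, rfl⟩
  · rintro ⟨X, hX, α, hα, rfl⟩
    exact ⟨X, α, ⟨hX, hα⟩, rfl⟩

theorem isIsotropicP_graph : IsIsotropicP d.graph := by
  rw [isIsotropicP_iff]
  intro p hp q hq
  obtain ⟨X, hX, α, hα, rfl⟩ := d.mem_graph.mp hp
  obtain ⟨Y, hY, β, hβ, rfl⟩ := d.mem_graph.mp hq
  have h1 := d.ωW X _ (d.sharp_mem β)
  have h2 := d.ωW Y _ (d.sharp_mem α)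
  have h3 := (Submodule.mem_dualAnnihilator α).mp hα Y hY
  have h4 := (Submodule.mem_dualAnnihilator β).mp hβ X hX
  have h5 := d.πskew α β
  have h6 := d.ωskew X Y
  simp only [map_add, LinearMap.add_apply, apply_sharp] at h1 h2 ⊢
  linarith

theorem finrank_graph : finrank ℝ d.graph = finrank ℝ V := by
  have hker : d.H.prod d.H.dualAnnihilator ⊓ LinearMap.ker d.graphMap = ⊥ := by
    rw [Submodule.eq_bot_iff]
    rintro ⟨X, α⟩ ⟨⟨hX, hα⟩, h0⟩
    have hα0 : α = 0 := by
      have hαW : α ∈ W.dualAnnihilator := by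
        have : α = -d.ω X := eq_neg_of_add_eq_zero_right (congrArg Prod.snd h0)
        exact this ▸ W.dualAnnihilator.neg_mem (d.ω_mem_dualAnnihilator X)
      exact Submodule.disjoint_def.mp d.disjoint_dualAnnihilator α hα hαW
    subst hα0
    have hX0 : X = 0 := by simpa [graphMap] using congrArg Prod.fst h0
    simp [hX0]
  have h := Submodule.finrank_map_add_finrank_inf_ker d.graphMap (d.H.prod d.H.dualAnnihilator)
  rw [hker, finrank_bot, add_zero] at h
  rw [graph, h, Submodule.finrank_prod, Subspace.finrank_add_finrank_dualAnnihilator_eq]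

theorem isMaxIsotropicP_graph : IsMaxIsotropicP d.graph :=
  d.isIsotropicP_graph.isMaxIsotropicP d.finrank_graph

theorem prod_inf_graph : W.prod W.dualAnnihilator ⊓ d.graph = ⊥ := by
  rw [Submodule.eq_bot_iff]
  rintro ⟨w, γ⟩ ⟨⟨hw, hγ⟩, hp⟩
  obtain ⟨X, hX, α, hα, h⟩ := d.mem_graph.mp hp
  obtain ⟨rfl, rfl⟩ := Prod.mk.inj h
  have hX0 : X = 0 := by
    have hXW : X ∈ W := by simpa using W.sub_mem hw (d.sharp_mem α)
    exact Submodule.disjoint_def.mp d.compl.disjoint X hX hXW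
  subst hX0
  have hα0 : α = 0 := Submodule.disjoint_def.mp d.disjoint_dualAnnihilator α hα (by simpa using hγ)
  simp [hα0]

theorem horizSub_graph : horizSub d.graph W = d.H := by
  ext X
  constructor
  · rintro ⟨γ, hγ, hp⟩
    obtain ⟨Y, hY, α, hα, h⟩ := d.mem_graph.mp hp
    obtain ⟨rfl, rfl⟩ := Prod.mk.inj h
    have hα0 : α = 0 := Submodule.disjoint_def.mp d.disjoint_dualAnnihilator α hα
      (by simpa using W.dualAnnihilator.sub_mem hγ (d.ω_mem_dualAnnihilator Y))
    simpa [hα0] using hY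
  · intro hX
    exact ⟨d.ω X, d.ω_mem_dualAnnihilator X, d.mem_graph.mpr ⟨X, hX, 0, zero_mem _, by simp⟩⟩

theorem sharp_ofIsotropic (hL : IsIsotropicP L) (hc : IsCompl L (W.prod W.dualAnnihilator)) :
    (ofIsotropic hL hc).sharp = vertSharp hc := by
  ext α
  exact (Module.evalEquiv ℝ V).symm_apply_apply (vertSharp hc α)

theorem graph_ofIsotropic (hL : IsMaxIsotropicP L) (hc : IsCompl L (W.prod W.dualAnnihilator)) :
    (ofIsotropic hL.1 hc).graph = L := by
  refine ((ofIsotropic hL.1 hc).isMaxIsotropicP_graph.2 L hL.1 fun p hp => ?_)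
  obtain ⟨X, ⟨γ, hγ, hX⟩, α, hα, rfl⟩ := (mem_graph _).mp hp
  rw [sharp_ofIsotropic, ← Prod.mk_add_mk]
  refine L.add_mem ?_ (mk_vertSharp_mem hc hL.1 hα)
  rwa [ofIsotropic, horizForm_eq_of_mem hc hγ hX]

theorem ofIsotropic_graph (hc : IsCompl d.graph (W.prod W.dualAnnihilator)) :
    ofIsotropic d.isIsotropicP_graph hc = d := by
  refine ext d.horizSub_graph ?_ (LinearMap.ext fun β => ?_)
  · refine LinearMap.ext_on_codisjoint d.compl.codisjoint (fun X hX => ?_) fun w hw => ?_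
    · exact horizForm_eq_of_mem hc (d.ω_mem_dualAnnihilator X)
        (d.mem_graph.mpr ⟨X, hX, 0, zero_mem _, by simp⟩)
    · exact (horizForm_eq_zero_of_mem hc hw).trans (d.ω_eq_zero hw).symm
  · refine LinearMap.ext_on_codisjoint (Subspace.isCompl_dualAnnihilator d.compl).codisjoint
      (fun α hα => ?_) fun γ hγ => ?_
    · rw [ofIsotropic_π_apply, vertSharp_eq_of_mem hc (d.sharp_mem α)
        (d.mem_graph.mpr ⟨0, zero_mem _, α, hα, by simp⟩), apply_sharp]
    · rw [ofIsotropic_π_apply, vertSharp_eq_zero_of_mem hc hγ, map_zero, d.πW β γ hγ]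

end GeomTriple

noncomputable def maxIsotropicEquivGeomTriple {V : Type*} [AddCommGroup V] [Module ℝ V]
    [FiniteDimensional ℝ V] (W : Submodule ℝ V) :
    {L : Submodule ℝ (V × Dual ℝ V) //
      IsMaxIsotropicP L ∧ W.prod W.dualAnnihilator ⊓ L = ⊥} ≃ GeomTriple V W where
  toFun L := .ofIsotropic L.2.1.1 (L.2.1.isCompl_prod L.2.2)
  invFun d := ⟨d.graph, d.isMaxIsotropicP_graph, d.prod_inf_graph⟩
  left_inv L := Subtype.ext (GeomTriple.graph_ofIsotropic L.2.1 _)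
  right_inv d := d.ofIsotropic_graph _

/-- Maximal isotropic subspaces `L ⊆ V ⊕ V*` with `(W ⊕ W⁰) ∩ L = 0` are in
bijective correspondence with triples `(H, ω, π)`, where the bijection and its
inverse are given by the natural constructions:
`H = {X : ∃ α ∈ W⁰, (X,α) ∈ L}`, `ω(X,·) =` the unique `α ∈ W⁰` with
`(X,α) ∈ L`, `π(α₁,α₂) = α₁(X₂)` for the unique `X₂ ∈ W` with `(X₂,α₂) ∈ L`,
and conversely `L = {(X + π♯(α), ι_X ω + α) : X ∈ H, α ∈ H⁰}`. -/
theorem geometric_data_correspondence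
    {V : Type*} [AddCommGroup V] [Module ℝ V] [FiniteDimensional ℝ V]
    (W : Submodule ℝ V) :
    ∃ e : {L : Submodule ℝ (V × Module.Dual ℝ V) //
        IsMaxIsotropicP L ∧ W.prod W.dualAnnihilator ⊓ L = ⊥} ≃ GeomTriple V W,
      (∀ L, ((e L).H : Set V) =
        {X | ∃ α ∈ W.dualAnnihilator, (X, α) ∈ L.1}) ∧
      (∀ L (X : V) (α : Module.Dual ℝ V),
        α ∈ W.dualAnnihilator → (X, α) ∈ L.1 → (e L).ω X = α) ∧
      (∀ L (X : V) (α β : Module.Dual ℝ V),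
        X ∈ W → (X, α) ∈ L.1 → (e L).π β α = β X) ∧
      (∀ d : GeomTriple V W, ((e.symm d).1 : Set (V × Module.Dual ℝ V)) =
        {p | ∃ X ∈ d.H, ∃ α ∈ d.H.dualAnnihilator,
          p = (X + (Module.evalEquiv ℝ V).symm (d.π.flip α), d.ω X + α)}) := by
  refine ⟨maxIsotropicEquivGeomTriple W, fun L => rfl,
    fun L X α hα h => horizForm_eq_of_mem _ hα h,
    fun L X α β hX h => congrArg β (vertSharp_eq_of_mem _ hX h), fun d => ?_⟩
  ext p
  exact d.mem_graph
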